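/- For i = 1,2 let n_i ≥ 1, let Λ_i ⊆ ℤ^{n_i} be any subsets and let ν_i : ℤ^{n_i} → ℤ be any functions, and define ν : ℤ^{n_1+n_2} → ℤ by ν(λ₁,λ₂) = ν₁(λ₁) + ν₂(λ₂). Then μ(P(Λ₁ × Λ₂, ν)) = μ(P(Λ₁, ν₁))·μ(P(Λ₂, ν₂)), an identity in [0,∞] (with the convention 0·∞ = 0). -/

import Mathlib

/-!
Above each `l ∈ Λ`, the set `P(Λ, ν)` is the box `∏ᵢ {ac = 1, v = vᵢ}`, where
`v = (l, -n - 1 - ν(l) - ∑ lᵢ)`, and these boxes are disjoint. The factor `{ac = 1, v = m}` is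
the ball of radius `p^(-(m + 1))` around `p^m`. A ball of radius `p^(k + 1)` is the disjoint
union of `p` translates of the ball of radius `p^k`, so the normalized Haar measure of `ℚ_p`
gives it mass `p^(k + 1)`; and a normalized Haar measure on `ℚ_p^(n + 1)` is the product of
the one-dimensional ones. The exponents of a box add up to `ν(l)`, so
`μ(P(Λ, ν)) = ∑_{l ∈ Λ} p^ν(l)`, and this sum is visibly multiplicative for `ν₁ + ν₂` on
`Λ₁ × Λ₂`.
-/

open MeasureTheory ENNReal

namespace KZ

variable (p : ℕ) [Fact p.Prime]

noncomputable instance : MeasurableSpace ℚ_[p] := borel _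
instance : BorelSpace ℚ_[p] := ⟨rfl⟩

/-- `ℚ_p^n`. -/
abbrev QV (n : ℕ) := Fin n → ℚ_[p]

/-- The closed unit polydisc `ℤ_p^n ⊆ ℚ_p^n`. -/
def disc (n : ℕ) : Set (QV p n) := {x | ∀ i, ‖x i‖ ≤ 1}

/-- `ac_ℓ(x) = 1`: `x` is nonzero and the unit `x·p^{-v(x)}` is congruent to `1` mod `p^ℓ`. -/
def acIsOne (ℓ : ℕ) (x : ℚ_[p]) : Prop :=
  x ≠ 0 ∧ ‖x * (p : ℚ_[p]) ^ (-x.valuation) - 1‖ ≤ (p : ℝ) ^ (-(ℓ : ℤ))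

/-- The coordinatewise valuation vector. -/
noncomputable def vvec {n : ℕ} (x : QV p n) : Fin n → ℤ := fun i => (x i).valuation

/-- The set `P(Λ) ⊆ ℚ_p^n` attached to `Λ ⊆ ℤ^n`: all coordinates have `ac = 1` and the
valuation vector lies in `Λ`. -/
def Pset0 {n : ℕ} (Λ : Set (Fin n → ℤ)) : Set (QV p n) :=
  {x | (∀ i, acIsOne p 1 (x i)) ∧ vvec p x ∈ Λ}

/-- The set `P(Λ, ν) ⊆ ℚ_p^{n+1}`: pairs `(x, y)` with `x ∈ P(Λ)`, `ac(y) = 1` and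
`v(y) = -n - 1 - ν(v(x)) - ∑ v(x_i)`. -/
def Pnu0 {n : ℕ} (Λ : Set (Fin n → ℤ)) (ν : (Fin n → ℤ) → ℤ) : Set (QV p (n + 1)) :=
  {z | (∀ i : Fin n, acIsOne p 1 (z (Fin.castSucc i))) ∧
    vvec p (z ∘ Fin.castSucc) ∈ Λ ∧
    acIsOne p 1 (z (Fin.last n)) ∧
    (z (Fin.last n)).valuation =
      -(n : ℤ) - 1 - ν (vvec p (z ∘ Fin.castSucc))
        - ∑ i : Fin n, (z (Fin.castSucc i)).valuation}

end KZ

open Metric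

theorem ENNReal.prod_zpow_eq_zpow_sum {ι : Type*} {a : ℝ≥0∞} (ha₀ : a ≠ 0) (ha : a ≠ ∞)
    (s : Finset ι) (f : ι → ℤ) : ∏ i ∈ s, a ^ f i = a ^ ∑ i ∈ s, f i := by
  classical
  induction s using Finset.induction_on with
  | empty => simp
  | insert i s hi ih =>
    rw [Finset.prod_insert hi, Finset.sum_insert hi, ih, ENNReal.zpow_add ha₀ ha]

theorem ENNReal.tsum_fin_append_mem_mul {α : Type*} {m n : ℕ} (Λ₁ : Set (Fin m → α))
    (Λ₂ : Set (Fin n → α)) (f₁ : (Fin m → α) → ℝ≥0∞) (f₂ : (Fin n → α) → ℝ≥0∞) :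
    ∑' w : {w : Fin (m + n) → α | (fun i => w (Fin.castAdd n i)) ∈ Λ₁ ∧
        (fun j => w (Fin.natAdd m j)) ∈ Λ₂},
      f₁ (fun i => w.1 (Fin.castAdd n i)) * f₂ (fun j => w.1 (Fin.natAdd m j)) =
      (∑' l : Λ₁, f₁ l) * ∑' l : Λ₂, f₂ l := by
  let e : Λ₁ × Λ₂ ≃ {w : Fin (m + n) → α | (fun i => w (Fin.castAdd n i)) ∈ Λ₁ ∧
      (fun j => w (Fin.natAdd m j)) ∈ Λ₂} :=
    (Equiv.Set.prod Λ₁ Λ₂).symm.trans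
      ((Fin.appendEquiv m n).subtypeEquiv fun l => by simp [Set.mem_prod])
  rw [← e.tsum_eq, ENNReal.tsum_prod', ← ENNReal.tsum_mul_right]
  simp only [Equiv.trans_apply, Equiv.subtypeEquiv_apply, Fin.appendEquiv_apply,
    Fin.append_left, Fin.append_right, ← ENNReal.tsum_mul_left, e]
  rfl

theorem MeasureTheory.Measure.addHaar_eq_of_apply_eq_one {G : Type*} [TopologicalSpace G]
    [AddGroup G] [IsTopologicalAddGroup G] [LocallyCompactSpace G] [SecondCountableTopology G]
    [MeasurableSpace G] [BorelSpace G] (μ ν : Measure G) [μ.IsAddHaarMeasure]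
    [ν.IsAddHaarMeasure] {s : Set G} (hμ : μ s = 1) (hν : ν s = 1) : μ = ν := by
  have h := μ.isAddLeftInvariant_eq_smul ν
  have hc : μ.addHaarScalarFactor ν = 1 := by
    simpa [hμ, hν] using (congrArg (· s) h).symm
  rw [h, hc, one_smul]

namespace Padic

variable {p : ℕ} [Fact p.Prime]

theorem norm_lt_zpow_iff_norm_mul_zpow_lt_one (z : ℚ_[p]) (k : ℤ) :
    ‖z‖ < (p : ℝ) ^ k ↔ ‖z * (p : ℚ_[p]) ^ k‖ < 1 := by
  rw [norm_mul, norm_p_zpow, ← lt_mul_inv_iff₀ (zpow_pos (mod_cast (Fact.out : p.Prime).pos) _),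
    one_mul, ← zpow_neg, neg_neg]

theorem norm_le_zpow_iff_norm_mul_zpow_le_one (z : ℚ_[p]) (k : ℤ) :
    ‖z‖ ≤ (p : ℝ) ^ k ↔ ‖z * (p : ℚ_[p]) ^ k‖ ≤ 1 := by
  rw [norm_mul, norm_p_zpow, ← le_mul_inv_iff₀ (zpow_pos (mod_cast (Fact.out : p.Prime).pos) _),
    one_mul, ← zpow_neg, neg_neg]

theorem norm_le_one_iff_exists_norm_sub_natCast_lt_one (y : ℚ_[p]) :
    ‖y‖ ≤ 1 ↔ ∃ j < p, ‖y - j‖ < 1 := by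
  constructor
  · intro hy
    obtain ⟨j, hj, hyj⟩ := PadicInt.exists_mem_range ⟨y, hy⟩
    exact ⟨j, hj, PadicInt.mem_nonunits.mp hyj⟩
  · rintro ⟨j, -, hyj⟩
    calc ‖y‖ = ‖(y - j) + (j : ℤ)‖ := by push_cast; ring_nf
      _ ≤ max ‖y - j‖ ‖((j : ℤ) : ℚ_[p])‖ := nonarchimedean _ _
      _ ≤ 1 := max_le hyj.le (norm_int_le_one _)

theorem valuation_eq_of_norm_eq {x y : ℚ_[p]} (hx : x ≠ 0) (hy : y ≠ 0) (h : ‖x‖ = ‖y‖) :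
    x.valuation = y.valuation := by
  have hp : (1 : ℝ) < p := mod_cast (Fact.out : p.Prime).one_lt
  rwa [norm_eq_zpow_neg_valuation hx, norm_eq_zpow_neg_valuation hy,
    zpow_right_inj₀ (zero_lt_one.trans hp) hp.ne', neg_inj] at h

theorem mem_closedBall_natCast_mul_zpow_iff (x : ℚ_[p]) (j : ℕ) (k : ℤ) :
    x ∈ closedBall ((j : ℚ_[p]) * (p : ℚ_[p]) ^ (-(k + 1))) ((p : ℝ) ^ k) ↔
      ‖x * (p : ℚ_[p]) ^ (k + 1) - j‖ < 1 := by
  have hp : (p : ℚ_[p]) ≠ 0 := mod_cast (Fact.out : p.Prime).ne_zero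
  rw [mem_closedBall, dist_eq_norm, norm_le_pow_iff_norm_lt_pow_add_one,
    norm_lt_zpow_iff_norm_mul_zpow_lt_one, sub_mul, mul_assoc, ← zpow_add₀ hp, neg_add_cancel,
    zpow_zero, mul_one]

variable (p) in
theorem closedBall_zpow_add_one_eq_biUnion (k : ℤ) :
    closedBall (0 : ℚ_[p]) ((p : ℝ) ^ (k + 1)) =
      ⋃ j ∈ Finset.range p, closedBall ((j : ℚ_[p]) * (p : ℚ_[p]) ^ (-(k + 1))) ((p : ℝ) ^ k) := by
  ext x
  simp only [Set.mem_iUnion, Finset.mem_range, exists_prop, mem_closedBall_natCast_mul_zpow_iff]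
  rw [mem_closedBall, dist_zero_right, norm_le_zpow_iff_norm_mul_zpow_le_one,
    norm_le_one_iff_exists_norm_sub_natCast_lt_one]

variable (p) in
theorem pairwiseDisjoint_closedBall_natCast_mul_zpow (k : ℤ) :
    (Finset.range p : Set ℕ).PairwiseDisjoint
      fun j => closedBall ((j : ℚ_[p]) * (p : ℚ_[p]) ^ (-(k + 1))) ((p : ℝ) ^ k) := by
  intro i hi j hj hij
  refine Set.disjoint_left.mpr fun x hxi hxj => hij ?_
  rw [mem_closedBall_natCast_mul_zpow_iff] at hxi hxj
  set y := x * (p : ℚ_[p]) ^ (k + 1)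
  have hdvd : (p : ℤ) ∣ (i : ℤ) - j := by
    rw [← norm_intCast_lt_one_iff]
    calc ‖(((i : ℤ) - j : ℤ) : ℚ_[p])‖ = ‖-(y - i) + (y - j)‖ := by push_cast; ring_nf
      _ ≤ max ‖-(y - i)‖ ‖y - j‖ := nonarchimedean _ _
      _ < 1 := by rw [norm_neg]; exact max_lt hxi hxj
  simp only [Finset.coe_range, Set.mem_Iio] at hi hj
  have := Int.eq_zero_of_dvd_of_natAbs_lt_natAbs hdvd (by omega)
  omega

section Haar

variable (μ : Measure ℚ_[p]) [μ.IsAddHaarMeasure]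

theorem measure_closedBall_zpow_add_one (k : ℤ) :
    μ (closedBall 0 ((p : ℝ) ^ (k + 1))) = p * μ (closedBall 0 ((p : ℝ) ^ k)) := by
  rw [closedBall_zpow_add_one_eq_biUnion,
    measure_biUnion_finset (pairwiseDisjoint_closedBall_natCast_mul_zpow p k)
      fun _ _ => measurableSet_closedBall]
  simp [Measure.addHaar_closedBall_center]

theorem measure_closedBall_zpow (k : ℤ) :
    μ (closedBall 0 ((p : ℝ) ^ k)) = (p : ℝ≥0∞) ^ k * μ (closedBall 0 1) := by
  have hp₀ : (p : ℝ≥0∞) ≠ 0 := mod_cast (Fact.out : p.Prime).ne_zero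
  have hp : (p : ℝ≥0∞) ≠ ∞ := ENNReal.natCast_ne_top p
  induction k using Int.induction_on with
  | zero => simp
  | succ k ih =>
    rw [measure_closedBall_zpow_add_one, ih, ENNReal.zpow_add hp₀ hp, zpow_one, ← mul_assoc,
      mul_comm (p : ℝ≥0∞)]
  | pred k ih =>
    have hpow := ENNReal.zpow_add hp₀ hp (-(k : ℤ) - 1) 1
    have hball := measure_closedBall_zpow_add_one μ (-(k : ℤ) - 1)
    rw [sub_add_cancel, zpow_one] at hpow
    rw [sub_add_cancel, ih, hpow, mul_comm _ (p : ℝ≥0∞), mul_assoc,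
      ENNReal.mul_right_inj hp₀ hp] at hball
    exact hball.symm

end Haar

variable (p) in
noncomputable def closedUnitBall : TopologicalSpace.PositiveCompacts ℚ_[p] where
  carrier := closedBall 0 1
  isCompact' := isCompact_closedBall 0 1
  interior_nonempty' := ⟨0, ball_subset_interior_closedBall (mem_ball_self one_pos)⟩

end Padic

namespace KZ

variable (p : ℕ) [Fact p.Prime]

def acOneShell (m : ℤ) : Set ℚ_[p] := {x | acIsOne p 1 x ∧ x.valuation = m}

theorem acOneShell_eq_closedBall (m : ℤ) :
    acOneShell p m = closedBall ((p : ℚ_[p]) ^ m) ((p : ℝ) ^ (-(m + 1))) := by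
  have hp : (p : ℚ_[p]) ≠ 0 := mod_cast (Fact.out : p.Prime).ne_zero
  have hunit (x : ℚ_[p]) :
      x * (p : ℚ_[p]) ^ (-m) - 1 = (x - (p : ℚ_[p]) ^ m) * (p : ℚ_[p]) ^ (-m) := by
    rw [sub_mul, ← zpow_add₀ hp, add_neg_cancel, zpow_zero]
  ext x
  rw [mem_closedBall, dist_eq_norm, Padic.norm_le_pow_iff_norm_lt_pow_add_one,
    show -(m + 1) + 1 = -m by ring]
  simp only [acOneShell, acIsOne, Set.mem_ofPred_eq]
  rw [Padic.norm_le_pow_iff_norm_lt_pow_add_one, Nat.cast_one, neg_add_cancel, zpow_zero]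
  constructor
  · rintro ⟨⟨-, hac⟩, rfl⟩
    rwa [Padic.norm_lt_zpow_iff_norm_mul_zpow_lt_one, ← hunit]
  · intro h
    have hnorm : ‖x‖ = ‖(p : ℚ_[p]) ^ m‖ :=
      Padic.norm_eq_of_norm_sub_lt_right (by rwa [Padic.norm_p_zpow])
    have hx : x ≠ 0 := norm_ne_zero_iff.mp (hnorm ▸ norm_ne_zero_iff.mpr (zpow_ne_zero m hp))
    have hv : x.valuation = m := by
      rw [Padic.valuation_eq_of_norm_eq hx (zpow_ne_zero m hp) hnorm, Padic.valuation_zpow,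
        Padic.valuation_p, mul_one]
    refine ⟨⟨hx, ?_⟩, hv⟩
    rwa [hv, hunit, ← Padic.norm_lt_zpow_iff_norm_mul_zpow_lt_one]

theorem measurableSet_acOneShell (m : ℤ) : MeasurableSet (acOneShell p m) := by
  rw [acOneShell_eq_closedBall]
  exact measurableSet_closedBall

theorem measure_acOneShell (μ : Measure ℚ_[p]) [μ.IsAddHaarMeasure] (m : ℤ) :
    μ (acOneShell p m) = (p : ℝ≥0∞) ^ (-(m + 1)) * μ (closedBall 0 1) := by
  rw [acOneShell_eq_closedBall, Measure.addHaar_closedBall_center, Padic.measure_closedBall_zpow]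

/-- The valuation vector of the points of `Pnu0 p Λ ν` lying over `l ∈ Λ`. -/
def pnuValuation {n : ℕ} (ν : (Fin n → ℤ) → ℤ) (l : Fin n → ℤ) : Fin (n + 1) → ℤ :=
  Fin.snoc l (-(n : ℤ) - 1 - ν l - ∑ i, l i)

theorem sum_neg_pnuValuation_add_one {n : ℕ} (ν : (Fin n → ℤ) → ℤ) (l : Fin n → ℤ) :
    ∑ i, -(pnuValuation ν l i + 1) = ν l := by
  simp only [pnuValuation, Fin.sum_univ_castSucc, Fin.snoc_castSucc, Fin.snoc_last,
    Finset.sum_neg_distrib, Finset.sum_add_distrib, Finset.sum_const, Finset.card_univ,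
    Fintype.card_fin, nsmul_eq_mul, mul_one]
  push_cast
  ring

theorem Pnu0_eq_biUnion {n : ℕ} (Λ : Set (Fin n → ℤ)) (ν : (Fin n → ℤ) → ℤ) :
    Pnu0 p Λ ν = ⋃ l ∈ Λ, Set.univ.pi fun i => acOneShell p (pnuValuation ν l i) := by
  ext z
  simp only [Pnu0, acOneShell, pnuValuation, Set.mem_iUnion, Set.mem_univ_pi,
    Fin.forall_fin_succ', Fin.snoc_castSucc, Fin.snoc_last, Set.mem_ofPred_eq, forall_and,
    exists_prop]
  constructor
  · rintro ⟨hac, hΛ, hlast, hv⟩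
    exact ⟨_, hΛ, ⟨hac, hlast⟩, fun _ => rfl, hv⟩
  · rintro ⟨l, hl, ⟨hac, hlast⟩, hv, hlastv⟩
    obtain rfl : vvec p (z ∘ Fin.castSucc) = l := funext hv
    exact ⟨hac, hl, hlast, hlastv⟩

theorem pairwiseDisjoint_pi_acOneShell {n : ℕ} (Λ : Set (Fin n → ℤ)) (ν : (Fin n → ℤ) → ℤ) :
    Λ.PairwiseDisjoint fun l => Set.univ.pi fun i => acOneShell p (pnuValuation ν l i) := by
  intro l _ l' _ hll'
  refine Set.disjoint_left.mpr fun z hz hz' => hll' (funext fun i => ?_)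
  have h := (hz (Fin.castSucc i) trivial).2
  have h' := (hz' (Fin.castSucc i) trivial).2
  simp only [pnuValuation, Fin.snoc_castSucc] at h h'
  rw [← h, ← h']

theorem disc_eq_pi (n : ℕ) : disc p n = Set.univ.pi fun _ => closedBall (0 : ℚ_[p]) 1 := by
  ext x
  simp [disc]

theorem measure_Pnu0 {n : ℕ} (Λ : Set (Fin n → ℤ)) (ν : (Fin n → ℤ) → ℤ)
    (μ : Measure (QV p (n + 1))) [μ.IsAddHaarMeasure] (hμ : μ (disc p (n + 1)) = 1) :
    μ (Pnu0 p Λ ν) = ∑' l : Λ, (p : ℝ≥0∞) ^ ν l := by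
  set μ₁ := Measure.addHaarMeasure (Padic.closedUnitBall p)
  have hμ₁ : μ₁ (closedBall 0 1) = 1 := Measure.addHaarMeasure_self
  have hpi : μ = Measure.pi fun _ => μ₁ :=
    Measure.addHaar_eq_of_apply_eq_one _ _ hμ (by simp [disc_eq_pi, Measure.pi_pi, hμ₁])
  rw [hpi, Pnu0_eq_biUnion, measure_biUnion Λ.to_countable (pairwiseDisjoint_pi_acOneShell p Λ ν)
    fun _ _ => MeasurableSet.univ_pi fun _ => measurableSet_acOneShell p _]
  refine tsum_congr fun l => ?_
  simp only [Measure.pi_pi, measure_acOneShell, hμ₁, mul_one]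
  rw [ENNReal.prod_zpow_eq_zpow_sum (mod_cast (Fact.out : p.Prime).ne_zero)
    (ENNReal.natCast_ne_top p), sum_neg_pnuValuation_add_one]

theorem measure_Pnu_prod_general
    (p : ℕ) [Fact p.Prime] (n₁ n₂ : ℕ)
    (Λ₁ : Set (Fin n₁ → ℤ)) (Λ₂ : Set (Fin n₂ → ℤ))
    (ν₁ : (Fin n₁ → ℤ) → ℤ) (ν₂ : (Fin n₂ → ℤ) → ℤ)
    (μa : Measure (QV p (n₁ + 1))) [μa.IsAddHaarMeasure] (ha : μa (disc p (n₁ + 1)) = 1)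
    (μb : Measure (QV p (n₂ + 1))) [μb.IsAddHaarMeasure] (hb : μb (disc p (n₂ + 1)) = 1)
    (μc : Measure (QV p (n₁ + n₂ + 1))) [μc.IsAddHaarMeasure]
    (hc : μc (disc p (n₁ + n₂ + 1)) = 1) :
    μc (Pnu0 p
        {w : Fin (n₁ + n₂) → ℤ | (fun i => w (Fin.castAdd n₂ i)) ∈ Λ₁ ∧
          (fun j => w (Fin.natAdd n₁ j)) ∈ Λ₂}
        (fun w => ν₁ (fun i => w (Fin.castAdd n₂ i)) + ν₂ (fun j => w (Fin.natAdd n₁ j))))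
      = μa (Pnu0 p Λ₁ ν₁) * μb (Pnu0 p Λ₂ ν₂) := by
  rw [measure_Pnu0 p _ _ μa ha, measure_Pnu0 p _ _ μb hb, measure_Pnu0 p _ _ μc hc,
    ← ENNReal.tsum_fin_append_mem_mul Λ₁ Λ₂ (fun l => (p : ℝ≥0∞) ^ ν₁ l)
      fun l => (p : ℝ≥0∞) ^ ν₂ l]
  exact tsum_congr fun _ => ENNReal.zpow_add (mod_cast (Fact.out : p.Prime).ne_zero)
    (ENNReal.natCast_ne_top p) _ _

/-- Multiplicativity of the measure of the sets `P(Λ,ν)`: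
`μ(P(Λ₁ × Λ₂, ν₁ ⊕ ν₂)) = μ(P(Λ₁,ν₁))·μ(P(Λ₂,ν₂))` in `[0,∞]`, where each `ℚ_p^k` carries the
Haar measure normalized by `μ(ℤ_p^k) = 1`. -/
theorem measure_Pnu_prod
    (p : ℕ) [Fact p.Prime] (n₁ n₂ : ℕ) (h₁ : 1 ≤ n₁) (h₂ : 1 ≤ n₂)
    (Λ₁ : Set (Fin n₁ → ℤ)) (Λ₂ : Set (Fin n₂ → ℤ))
    (ν₁ : (Fin n₁ → ℤ) → ℤ) (ν₂ : (Fin n₂ → ℤ) → ℤ)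
    (μa : Measure (QV p (n₁ + 1))) [μa.IsAddHaarMeasure] (ha : μa (disc p (n₁ + 1)) = 1)
    (μb : Measure (QV p (n₂ + 1))) [μb.IsAddHaarMeasure] (hb : μb (disc p (n₂ + 1)) = 1)
    (μc : Measure (QV p (n₁ + n₂ + 1))) [μc.IsAddHaarMeasure]
    (hc : μc (disc p (n₁ + n₂ + 1)) = 1) :
    μc (Pnu0 p
        {w : Fin (n₁ + n₂) → ℤ | (fun i => w (Fin.castAdd n₂ i)) ∈ Λ₁ ∧
          (fun j => w (Fin.natAdd n₁ j)) ∈ Λ₂}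
        (fun w => ν₁ (fun i => w (Fin.castAdd n₂ i)) + ν₂ (fun j => w (Fin.natAdd n₁ j))))
      = μa (Pnu0 p Λ₁ ν₁) * μb (Pnu0 p Λ₂ ν₂) :=
  measure_Pnu_prod_general p n₁ n₂ Λ₁ Λ₂ ν₁ ν₂ μa ha μb hb μc hc

end KZ
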